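/- arXiv:1909.12575 — 5 statements merged into one kernel-verified Lean document; each statement's English description precedes it below -/
import Mathlib

section
/- Let A be an associative C(v)-algebra generated by p_i, q_i (i in Z) with relations p_i p_j + p_j p_i = 0, q_i q_j + q_j q_i = 0, and p_{i+1} q_j + v q_j p_{i+1} = -v p_i q_{j+1} - q_{j+1} p_i. Then q_s (p_k q_s + v^{-1} q_s p_k) = v (p_k q_s + v^{-1} q_s p_k) q_s and (p_k q_s + v^{-1} q_s p_k) p_k = v p_k (p_k q_s + v^{-1} q_s p_k) for all k, s in Z. -/
/-- The field ℂ(v) of rational functions. -/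
noncomputable abbrev Kv : Type := RatFunc ℂ

noncomputable abbrev vv : Kv := RatFunc.X

/-- `q s` and `p k` both `v`-commute with `[p_k, q_s]_{v⁻¹} = p k * q s + v⁻¹ • (q s * p k)`. -/
theorem stmt2 (A : Type*) [Ring A] [Algebra Kv A]
    (p q : ℤ → A)
    (hpp : ∀ i j : ℤ, p i * p j + p j * p i = 0)
    (hqq : ∀ i j : ℤ, q i * q j + q j * q i = 0)
    (hpq : ∀ i j : ℤ, p (i + 1) * q j + vv • (q j * p (i + 1)) =
      -(vv • (p i * q (j + 1))) - q (j + 1) * p i) :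
    ∀ k s : ℤ,
      q s * (p k * q s + vv⁻¹ • (q s * p k)) =
        vv • ((p k * q s + vv⁻¹ • (q s * p k)) * q s) ∧
      (p k * q s + vv⁻¹ • (q s * p k)) * p k =
        vv • (p k * (p k * q s + vv⁻¹ • (q s * p k))) := by
  have hv : vv ≠ 0 := RatFunc.X_ne_zero
  haveI : CharZero Kv := charZero_of_injective_algebraMap (algebraMap ℂ Kv).injective
  have h2 : (2 : Kv) ≠ 0 := two_ne_zero
  have sq_zero : ∀ (x : A), x * x + x * x = 0 → x * x = 0 := by
    intro x h
    have h2' : (2 : Kv) • (x * x) = 0 := by rw [two_smul]; exact h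
    calc x * x = (2 : Kv)⁻¹ • (2 : Kv) • (x * x) := (inv_smul_smul₀ h2 _).symm
      _ = 0 := by rw [h2', smul_zero]
  have hq2 : ∀ s, q s * q s = 0 := fun s => sq_zero _ (hqq s s)
  have hp2 : ∀ k, p k * p k = 0 := fun k => sq_zero _ (hpp k k)
  intro k s
  have hq2' : ∀ x : A, q s * (q s * x) = 0 := fun x => by rw [← mul_assoc, hq2, zero_mul]
  have hp2' : ∀ x : A, p k * (p k * x) = 0 := fun x => by rw [← mul_assoc, hp2, zero_mul]
  constructor <;>
    simp [mul_add, add_mul, smul_add, mul_smul_comm, smul_mul_assoc, smul_smul,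
      mul_inv_cancel₀ hv, mul_assoc, hq2, hp2, hq2', hp2']
end

section
/- Let U be an associative algebra over a commutative ring with elements X, Y, Z of parities p(X), p(Y), p(Z) in {0,1}, and [x,y]_a := x y - (-1)^{p(x)p(y)} a y x for homogeneous x, y. Then for any invertible scalars a, b, c: [X, [Y,Z]_a]_b = [[X,Y]_c, Z]_{a b c^{-1}} + (-1)^{p(X)p(Y)} c [Y, [X,Z]_{b c^{-1}}]_{a c^{-1}}. -/
/-- The twisted super-bracket `[x,y]_a = x y - (-1)^{ε₁ ε₂} a • (y x)` of elements of
parities `ε₁, ε₂`. -/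
def tbr {R : Type*} [CommRing R] {U : Type*} [Ring U] [Algebra R U]
    (ε₁ ε₂ : ℕ) (a : R) (x y : U) : U :=
  x * y - ((-1 : R) ^ (ε₁ * ε₂) * a) • (y * x)

/-- the super-Jacobi-type identity
`[X, [Y,Z]_a]_b = [[X,Y]_c, Z]_{a b c⁻¹} + (-1)^{p(X)p(Y)} c [Y, [X,Z]_{b c⁻¹}]_{a c⁻¹}`
for elements of parities `pX, pY, pZ ∈ {0,1}` and invertible scalars `a, b, c`. -/
theorem stmt4 (R : Type*) [CommRing R] (U : Type*) [Ring U] [Algebra R U]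
    (X Y Z : U) (pX pY pZ : ℕ) (hX : pX ≤ 1) (hY : pY ≤ 1) (hZ : pZ ≤ 1)
    (a b c : Rˣ) :
    tbr pX (pY + pZ) (b : R) X (tbr pY pZ (a : R) Y Z) =
      tbr (pX + pY) pZ ((a : R) * b * (c⁻¹ : Rˣ)) (tbr pX pY (c : R) X Y) Z +
      ((-1 : R) ^ (pX * pY) * c) •
        tbr pY (pX + pZ) ((a : R) * (c⁻¹ : Rˣ)) Y
          (tbr pX pZ ((b : R) * (c⁻¹ : Rˣ)) X Z) := by
  have hc : (c : R) * (c⁻¹ : Rˣ) = 1 := Units.mul_inv c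
  interval_cases pX <;> interval_cases pY <;> interval_cases pZ <;>
    simp only [tbr, mul_sub, sub_mul, smul_sub, smul_smul, mul_smul_comm,
      smul_mul_assoc, mul_assoc] <;>
    match_scalars <;> ring_nf <;>
    simp [sq, mul_assoc, mul_comm, mul_left_comm, Units.inv_mul, Units.mul_inv]
end

section
/- Let A be an associative C(v)-algebra generated by odd elements p_i, q_i (i in Z) with relations p_i p_j + p_j p_i = 0, q_i q_j + q_j q_i = 0, and p_{i+1} q_j + v q_j p_{i+1} = -v p_i q_{j+1} - q_{j+1} p_i. Define r_i := p_i q_0 + v^{-1} q_0 p_i. Then for all i in Z and j >= 0: p_i q_j + v^{-1} q_j p_i = (-v)^j r_{i+j} + (v - v^{-1}) * sum over k from 1 to j of (-v)^{k-1} p_{i+k} q_{j-k}. -/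
lemma aux5 (A : Type*) [Ring A] [Algebra Kv A]
    (p q : ℤ → A)
    (hpq : ∀ i j : ℤ, p (i + 1) * q j + vv • (q j * p (i + 1)) =
      -(vv • (p i * q (j + 1))) - q (j + 1) * p i)
    (r : ℤ → A) (hr : ∀ i : ℤ, r i = p i * q 0 + vv⁻¹ • (q 0 * p i)) :
    ∀ (i : ℤ) (j : ℕ),
      p i * q j + vv⁻¹ • ((q j : A) * p i) =
        (-vv) ^ j • r (i + j) +
        (vv - vv⁻¹) • ∑ k ∈ Finset.range j, (-vv) ^ k • (p (i + 1 + k) * q ((j : ℤ) - 1 - k)) := by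
  intro i j
  induction j generalizing i with
  | zero => simp [hr]
  | succ j ih =>
      have hv : (vv : Kv) ≠ 0 := RatFunc.X_ne_zero
      have hcan : ∀ x : A, vv⁻¹ • (vv • x) = x := fun x => by
        rw [smul_smul, inv_mul_cancel₀ hv, one_smul]
      have hY : q ((j:ℤ)+1) * p i =
          -(vv • (p i * q ((j:ℤ)+1))) - p (i+1) * q (j:ℤ) - vv • (q (j:ℤ) * p (i+1)) := by
        rw [sub_sub, eq_sub_iff_add_eq, hpq i (j:ℤ)]
        abel
      have h := ih (i+1)
      have hQp : q (j:ℤ) * p (i+1) =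
          vv • ((-vv)^j • r (i+1+(j:ℤ)) +
            (vv - vv⁻¹) • ∑ k ∈ Finset.range j, (-vv)^k • (p (i+1+1+(k:ℤ)) * q ((j:ℤ)-1-(k:ℤ))))
          - vv • (p (i+1) * q (j:ℤ)) := by
        calc q (j:ℤ) * p (i+1) = vv • (vv⁻¹ • (q (j:ℤ) * p (i+1))) := by
              rw [smul_smul, mul_inv_cancel₀ hv, one_smul]
          _ = vv • (((-vv)^j • r (i+1+(j:ℤ)) +
            (vv - vv⁻¹) • ∑ k ∈ Finset.range j, (-vv)^k • (p (i+1+1+(k:ℤ)) * q ((j:ℤ)-1-(k:ℤ))))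
              - p (i+1) * q (j:ℤ)) := by rw [eq_sub_of_add_eq' h]
          _ = _ := smul_sub _ _ _
      push_cast
      have hidx : i + ((j:ℤ)+1) = i+1+(j:ℤ) := by ring
      rw [hidx, Finset.sum_range_succ']
      push_cast
      have hsum : ∑ k ∈ Finset.range j,
          (-vv) ^ (k+1) • (p (i + 1 + ((k:ℤ)+1)) * q ((j:ℤ)+1-1-((k:ℤ)+1))) =
          (-vv) • ∑ k ∈ Finset.range j, (-vv)^k • (p (i+1+1+(k:ℤ)) * q ((j:ℤ)-1-(k:ℤ))) := by
        rw [Finset.smul_sum]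
        refine Finset.sum_congr rfl fun k _ => ?_
        have e1 : i + 1 + ((k:ℤ)+1) = i+1+1+(k:ℤ) := by ring
        have e2 : (j:ℤ)+1-1-((k:ℤ)+1) = (j:ℤ)-1-(k:ℤ) := by ring
        rw [e1, e2, smul_smul, pow_succ, mul_comm]
      rw [hsum]
      have e0 : i + 1 + (0:ℤ) = i + 1 := by ring
      have e0' : (j:ℤ)+1-1-(0:ℤ) = (j:ℤ) := by ring
      rw [e0, e0', pow_zero, one_smul]
      set R := r (i+1+(j:ℤ)) with hR
      set Sg := ∑ k ∈ Finset.range j, (-vv)^k • (p (i+1+1+(k:ℤ)) * q ((j:ℤ)-1-(k:ℤ))) with hSg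
      set P := p (i+1) * q (j:ℤ) with hP
      set X := p i * q ((j:ℤ)+1) with hX
      set T := (-vv)^j • R + (vv - vv⁻¹) • Sg with hT
      calc X + vv⁻¹ • (q ((j:ℤ)+1) * p i)
          = X + vv⁻¹ • (-(vv • X) - P - (vv • (vv • T) - vv • (vv • P))) := by
            rw [hY, hQp, smul_sub vv (vv • T)]
        _ = X + (-X - vv⁻¹ • P - (vv • T - vv • P)) := by
            rw [smul_sub vv⁻¹, smul_sub vv⁻¹, smul_sub vv⁻¹ (vv • (vv • T)), smul_neg,
              hcan, hcan, hcan]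
        _ = vv • P - vv⁻¹ • P - vv • T := by abel
        _ = (vv - vv⁻¹) • P - ((vv * (-vv)^j) • R + (vv * (vv - vv⁻¹)) • Sg) := by
            rw [sub_smul, hT, smul_add vv, smul_smul, smul_smul]
        _ = (-vv)^(j+1) • R + (vv - vv⁻¹) • (-vv • Sg + P) := by
            have c1 : vv * (-vv)^j = -((-vv)^(j+1)) := by
              rw [pow_succ]; ring
            have c2 : vv * (vv - vv⁻¹) = -((vv - vv⁻¹) * (-vv)) := by ring
            rw [c1, c2, neg_smul, neg_smul, smul_add (vv - vv⁻¹), ← smul_smul]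
            abel

/-- with `r_i := p_i q_0 + v⁻¹ q_0 p_i`, for all `i ∈ ℤ` and `j ≥ 0`:
`p_i q_j + v⁻¹ q_j p_i = (-v)^j r_{i+j} + (v - v⁻¹) ∑_{k=1}^{j} (-v)^{k-1} p_{i+k} q_{j-k}`. -/
theorem stmt5 (A : Type*) [Ring A] [Algebra Kv A]
    (p q : ℤ → A)
    (hpp : ∀ i j : ℤ, p i * p j + p j * p i = 0)
    (hqq : ∀ i j : ℤ, q i * q j + q j * q i = 0)
    (hpq : ∀ i j : ℤ, p (i + 1) * q j + vv • (q j * p (i + 1)) =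
      -(vv • (p i * q (j + 1))) - q (j + 1) * p i)
    (r : ℤ → A) (hr : ∀ i : ℤ, r i = p i * q 0 + vv⁻¹ • (q 0 * p i)) :
    ∀ (i : ℤ) (j : ℕ),
      p i * q j + vv⁻¹ • ((q j : A) * p i) =
        (-vv) ^ j • r (i + j) +
        (vv - vv⁻¹) • ∑ k ∈ Finset.Icc 1 j, (-vv) ^ (k - 1) • (p (i + k) * q ((j : ℤ) - k)) := by
  intro i j
  rw [aux5 A p q hpq r hr i j]
  congr 2
  rw [← Finset.Ico_add_one_right_eq_Icc, Finset.sum_Ico_eq_sum_range]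
  simp only [Nat.add_sub_cancel, Nat.succ_sub_one]
  refine Finset.sum_congr rfl fun k _ => ?_
  have h1 : 1 + k - 1 = k := by omega
  rw [h1]
  have e1 : i + ((1+k:ℕ):ℤ) = i + 1 + (k:ℤ) := by push_cast; ring
  have e2 : (j:ℤ) - ((1+k:ℕ):ℤ) = (j:ℤ) - 1 - (k:ℤ) := by push_cast; ring
  rw [e1, e2]
end

section
/- Let v be a primitive root of unity of order 2t in C and let Λ-bar be the space of rational functions F(x_1,...,x_n, y_1,...,y_m) = f/∏_{i,j}(x_i - y_j), f a Laurent polynomial skew-symmetric in the x's and in the y's, equipped with the shuffle product using kernels (x + v^{-1} y)/(x - y). Say F satisfies the wheel condition if F vanishes whenever x_1/y_1 = y_1/x_2 = x_2/y_2 = ... = x_t/y_t = y_t/x_1 = -v^{-1}. Then the subspace Λ^w of elements satisfying the wheel condition is closed under the shuffle product. -/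
open MvPolynomial Equiv

/-- Numerators of elements of `Λ̄_{n,m}`: polynomials in `x_1,…,x_n, y_1,…,y_m` over ℂ
(the corresponding rational function is `F = f / ∏_{i,j}(x_i - y_j)`). -/
abbrev LNum (n m : ℕ) : Type := MvPolynomial (Fin n ⊕ Fin m) ℂ

/-- Skew-symmetry in the `x`-variables and in the `y`-variables separately. -/
def SkewSym {n m : ℕ} (f : LNum n m) : Prop :=
  (∀ σ : Perm (Fin n), rename (Sum.map σ id) f = (Perm.sign σ : ℤ) • f) ∧
  (∀ τ : Perm (Fin m), rename (Sum.map id τ) f = (Perm.sign τ : ℤ) • f)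

/-- The denominator `∏_{i,j}(x_i - y_j)` evaluated at a point `z`. -/
def Dval {n m : ℕ} (z : Fin n ⊕ Fin m → ℂ) : ℂ :=
  ∏ i : Fin n, ∏ j : Fin m, (z (Sum.inl i) - z (Sum.inr j))

/-- A point of the "wheel": `x_1/y_1 = y_1/x_2 = ⋯ = x_t/y_t = y_t/x_1 = -v⁻¹`,
i.e. `y_i = -v x_i` and (cyclically) `x_{i+1} = -v y_i`, with nonvanishing wheel
variables (this requires `t ≤ n` and `t ≤ m`). -/
def WheelPt (v : ℂ) (t : ℕ) {n m : ℕ} (z : Fin n ⊕ Fin m → ℂ) : Prop :=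
  ∃ (hn : t ≤ n) (hm : t ≤ m),
    (∀ i : Fin t, z (Sum.inl (Fin.castLE hn i)) ≠ 0) ∧
    (∀ i : Fin t, z (Sum.inr (Fin.castLE hm i)) =
      -v * z (Sum.inl (Fin.castLE hn i))) ∧
    (∀ i : Fin t, z (Sum.inl (Fin.castLE hn ⟨((i : ℕ) + 1) % t, Nat.mod_lt _ i.pos⟩)) =
      -v * z (Sum.inr (Fin.castLE hm i)))

/-- The wheel condition: the rational function `f / ∏(x_i - y_j)` vanishes at every
wheel point where it is defined. -/
def WheelCond (v : ℂ) (t : ℕ) {n m : ℕ} (f : LNum n m) : Prop :=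
  ∀ z : Fin n ⊕ Fin m → ℂ, WheelPt v t z → Dval z ≠ 0 → eval z f = 0

/-- The numerator of the shuffle product `F ⋆ G` of `F = f/∏(x-y) ∈ Λ̄_{k₁,l₁}` and
`G = g/∏(x-y) ∈ Λ̄_{k₂,l₂}`: the doubly skew-symmetrization of
`f·g·∏(x_i + v⁻¹ y_j)·∏(y_j + v⁻¹ x_i)` over cross pairs. -/
noncomputable def shufNum (v : ℂ) {k₁ l₁ k₂ l₂ : ℕ}
    (f : LNum k₁ l₁) (g : LNum k₂ l₂) : LNum (k₁ + k₂) (l₁ + l₂) :=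
  (((k₁ + k₂).factorial * (l₁ + l₂).factorial : ℂ))⁻¹ •
    ∑ σ : Perm (Fin (k₁ + k₂)), ∑ τ : Perm (Fin (l₁ + l₂)),
      ((Perm.sign σ : ℤ) * (Perm.sign τ : ℤ)) •
        rename (Sum.map σ τ)
          (rename (Sum.map (Fin.castAdd k₂) (Fin.castAdd l₂)) f *
           rename (Sum.map (Fin.natAdd k₁) (Fin.natAdd l₁)) g *
           (∏ i : Fin k₁, ∏ j : Fin l₂,
              (X (Sum.inl (Fin.castAdd k₂ i)) +
                C v⁻¹ * X (Sum.inr (Fin.natAdd l₁ j)))) *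
           ∏ j : Fin l₁, ∏ i : Fin k₂,
              (X (Sum.inr (Fin.castAdd l₂ j)) +
                C v⁻¹ * X (Sum.inl (Fin.natAdd k₁ i))))

/-! Fix one term `(σ, τ)` of the antisymmetrization and follow the wheel variables
`x_1, y_1, x_2, …, y_t` around the cycle, recording whether each sits in the block of `f`
or of `g`. If the cycle ever passes from the `f`-block to the `g`-block, it does so between
two consecutive variables of ratio `-v⁻¹`, and the corresponding factor `x_i + v⁻¹ y_i` or
`y_i + v⁻¹ x_{i+1}` of the kernel vanishes. Otherwise the whole wheel lies in one block, where
it is a wheel for `f` or for `g` in permuted variables; skew-symmetry moves it to the first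
`t` variables, and the wheel condition of that factor applies. -/

lemma finRotate_apply_eq_mk {t : ℕ} (i : Fin t) :
    finRotate t i = ⟨((i : ℕ) + 1) % t, Nat.mod_lt _ i.pos⟩ := by
  have := i.neZero
  ext
  simp [finRotate_apply, Fin.val_add]

lemma forall_of_apply_finRotate {t : ℕ} {P : Fin t → Prop}
    (hP : ∀ i, P i → P (finRotate t i)) {j : Fin t} (hj : P j) (i : Fin t) : P i := by
  have hiter : ∀ k : ℕ, P ((finRotate t)^[k] j) := by
    intro k
    induction k with
    | zero => exact hj
    | succ k ih => rw [Function.iterate_succ_apply']; exact hP _ ih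
  have := j.neZero
  simpa [← finCycle_eq_finRotate_iterate] using hiter (i - j).1

/-- `P` and `Q` are read on the vertices `x_i` and `y_i` of the cycle `x_1, y_1, …, x_t, y_t`. -/
lemma exists_exit_or_forall_or_forall {t : ℕ} (P Q : Fin t → Prop) :
    (∃ i, P i ∧ ¬Q i) ∨ (∃ i, Q i ∧ ¬P (finRotate t i)) ∨
      (∀ i, P i ∧ Q i) ∨ (∀ i, ¬P i ∧ ¬Q i) := by
  by_cases hPQ : ∃ i, P i ∧ ¬Q i
  · exact Or.inl hPQ
  by_cases hQP : ∃ i, Q i ∧ ¬P (finRotate t i)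
  · exact Or.inr (Or.inl hQP)
  push Not at hPQ hQP
  by_cases hP : ∃ j, P j
  · obtain ⟨j, hj⟩ := hP
    have hall := forall_of_apply_finRotate (fun i hi => hQP i (hPQ i hi)) hj
    exact Or.inr (Or.inr (Or.inl fun i => ⟨hall i, hPQ i (hall i)⟩))
  · push Not at hP
    exact Or.inr (Or.inr (Or.inr fun i => ⟨hP i, fun hq => hP _ (hQP i hq)⟩))

lemma Fin.mem_range_natAdd_of_notMem_range_castAdd {m n : ℕ} {x : Fin (m + n)}
    (hx : x ∉ Set.range (Fin.castAdd n)) : x ∈ Set.range (Fin.natAdd m) := by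
  induction x using Fin.addCases with
  | left a => exact absurd ⟨a, rfl⟩ hx
  | right b => exact ⟨b, rfl⟩

lemma Dval_ne_zero_iff {n m : ℕ} (z : Fin n ⊕ Fin m → ℂ) :
    Dval z ≠ 0 ↔ ∀ a b, z (Sum.inl a) - z (Sum.inr b) ≠ 0 := by
  simp only [Dval, Finset.prod_ne_zero_iff, Finset.mem_univ, forall_const]

lemma SkewSym.eval_comp_sumMap {n m : ℕ} {f : LNum n m} (hf : SkewSym f)
    (σ : Perm (Fin n)) (τ : Perm (Fin m)) (w : Fin n ⊕ Fin m → ℂ) :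
    eval (w ∘ Sum.map σ τ) f = ((Perm.sign τ : ℤ) * (Perm.sign σ : ℤ)) • eval w f := by
  have hmap : (Sum.map σ τ : Fin n ⊕ Fin m → Fin n ⊕ Fin m) = Sum.map σ id ∘ Sum.map id τ := by
    funext s; cases s <;> rfl
  rw [← eval_rename, hmap, ← rename_rename, hf.2 τ, map_zsmul, hf.1 σ, smul_smul, map_zsmul]

/-- The wheel `x_{c 1}/y_{d 1} = y_{d 1}/x_{c 2} = ⋯ = y_{d t}/x_{c 1} = -v⁻¹`. -/
def IsWheelOn (v : ℂ) {t n m : ℕ} (z : Fin n ⊕ Fin m → ℂ) (c : Fin t → Fin n)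
    (d : Fin t → Fin m) : Prop :=
  (∀ i, z (Sum.inl (c i)) ≠ 0) ∧
  (∀ i, z (Sum.inr (d i)) = -v * z (Sum.inl (c i))) ∧
  (∀ i, z (Sum.inl (c (finRotate t i))) = -v * z (Sum.inr (d i)))

section IsWheelOn

variable {v : ℂ} {t n m : ℕ} {z : Fin n ⊕ Fin m → ℂ} {c : Fin t → Fin n} {d : Fin t → Fin m}

lemma wheelPt_iff : WheelPt v t z ↔ ∃ (hn : t ≤ n) (hm : t ≤ m),
    IsWheelOn v z (Fin.castLE hn) (Fin.castLE hm) := by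
  simp only [WheelPt, IsWheelOn, finRotate_apply_eq_mk]

lemma isWheelOn_comp_sumMap_iff {n' m' : ℕ} (e₁ : Fin n' → Fin n) (e₂ : Fin m' → Fin m)
    (c' : Fin t → Fin n') (d' : Fin t → Fin m') :
    IsWheelOn v (z ∘ Sum.map e₁ e₂) c' d' ↔ IsWheelOn v z (e₁ ∘ c') (e₂ ∘ d') :=
  Iff.rfl

lemma IsWheelOn.v_ne_zero (hz : IsWheelOn v z c d) (i : Fin t) : v ≠ 0 := by
  rintro rfl
  exact hz.1 (finRotate t i) (by rw [hz.2.2 i, neg_zero, zero_mul])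

lemma IsWheelOn.x_add_inv_mul_y (hz : IsWheelOn v z c d) (i : Fin t) :
    z (Sum.inl (c i)) + v⁻¹ * z (Sum.inr (d i)) = 0 := by
  have := hz.v_ne_zero i
  rw [hz.2.1 i]
  field_simp
  ring

lemma IsWheelOn.y_add_inv_mul_x_finRotate (hz : IsWheelOn v z c d) (i : Fin t) :
    z (Sum.inr (d i)) + v⁻¹ * z (Sum.inl (c (finRotate t i))) = 0 := by
  have := hz.v_ne_zero i
  rw [hz.2.2 i]
  field_simp
  ring

end IsWheelOn

lemma SkewSym.eval_eq_zero_of_isWheelOn {v : ℂ} {t n m : ℕ} {f : LNum n m}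
    (hf : SkewSym f) (hfw : WheelCond v t f) {w : Fin n ⊕ Fin m → ℂ}
    {c : Fin t → Fin n} {d : Fin t → Fin m} (hc : Function.Injective c)
    (hd : Function.Injective d) (hw : IsWheelOn v w c d)
    (hD : ∀ a b, w (Sum.inl a) - w (Sum.inr b) ≠ 0) : eval w f = 0 := by
  have htn : t ≤ n := by simpa using Fintype.card_le_of_injective c hc
  have htm : t ≤ m := by simpa using Fintype.card_le_of_injective d hd
  obtain ⟨ρ, hρ⟩ := Perm.exists_extending_pair _ c (Fin.castLE_injective htn) hc
  obtain ⟨π, hπ⟩ := Perm.exists_extending_pair _ d (Fin.castLE_injective htm) hd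
  have hwheel : WheelPt v t (w ∘ Sum.map ρ π) := by
    refine wheelPt_iff.2 ⟨htn, htm, ?_⟩
    rw [isWheelOn_comp_sumMap_iff]
    convert hw using 1 <;> funext i <;> simp [hρ, hπ]
  have hzero := hfw _ hwheel ((Dval_ne_zero_iff _).2 fun a b => hD _ _)
  rw [hf.eval_comp_sumMap, smul_eq_zero] at hzero
  exact hzero.resolve_left (by simp)

noncomputable def shufTerm (v : ℂ) {k₁ l₁ k₂ l₂ : ℕ}
    (f : LNum k₁ l₁) (g : LNum k₂ l₂) : LNum (k₁ + k₂) (l₁ + l₂) :=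
  rename (Sum.map (Fin.castAdd k₂) (Fin.castAdd l₂)) f *
    rename (Sum.map (Fin.natAdd k₁) (Fin.natAdd l₁)) g *
    (∏ i : Fin k₁, ∏ j : Fin l₂,
      (X (Sum.inl (Fin.castAdd k₂ i)) + C v⁻¹ * X (Sum.inr (Fin.natAdd l₁ j)))) *
    ∏ j : Fin l₁, ∏ i : Fin k₂,
      (X (Sum.inr (Fin.castAdd l₂ j)) + C v⁻¹ * X (Sum.inl (Fin.natAdd k₁ i)))

section shufTerm

variable {v : ℂ} {k₁ l₁ k₂ l₂ : ℕ} {f : LNum k₁ l₁} {g : LNum k₂ l₂}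

lemma shufNum_eq_sum_rename_shufTerm : shufNum v f g =
    (((k₁ + k₂).factorial * (l₁ + l₂).factorial : ℂ))⁻¹ •
      ∑ σ : Perm (Fin (k₁ + k₂)), ∑ τ : Perm (Fin (l₁ + l₂)),
        ((Perm.sign σ : ℤ) * (Perm.sign τ : ℤ)) • rename (Sum.map σ τ) (shufTerm v f g) :=
  rfl

lemma eval_shufTerm (w : Fin (k₁ + k₂) ⊕ Fin (l₁ + l₂) → ℂ) :
    eval w (shufTerm v f g) =
      eval (w ∘ Sum.map (Fin.castAdd k₂) (Fin.castAdd l₂)) f *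
        eval (w ∘ Sum.map (Fin.natAdd k₁) (Fin.natAdd l₁)) g *
        (∏ i : Fin k₁, ∏ j : Fin l₂,
          (w (Sum.inl (Fin.castAdd k₂ i)) + v⁻¹ * w (Sum.inr (Fin.natAdd l₁ j)))) *
        ∏ j : Fin l₁, ∏ i : Fin k₂,
          (w (Sum.inr (Fin.castAdd l₂ j)) + v⁻¹ * w (Sum.inl (Fin.natAdd k₁ i))) := by
  simp [shufTerm, eval_rename, map_prod]

lemma eval_shufTerm_eq_zero {t : ℕ} (hf : SkewSym f) (hg : SkewSym g)
    (hfw : WheelCond v t f) (hgw : WheelCond v t g) {w : Fin (k₁ + k₂) ⊕ Fin (l₁ + l₂) → ℂ}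
    {c : Fin t → Fin (k₁ + k₂)} {d : Fin t → Fin (l₁ + l₂)} (hc : Function.Injective c)
    (hd : Function.Injective d) (hw : IsWheelOn v w c d)
    (hD : ∀ a b, w (Sum.inl a) - w (Sum.inr b) ≠ 0) : eval w (shufTerm v f g) = 0 := by
  rw [eval_shufTerm]
  rcases exists_exit_or_forall_or_forall (fun i => c i ∈ Set.range (Fin.castAdd k₂))
      (fun i => d i ∈ Set.range (Fin.castAdd l₂)) with
    ⟨i, ⟨a, ha⟩, hdi⟩ | ⟨i, ⟨b, hb⟩, hci⟩ | hleft | hright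
  · obtain ⟨b, hb⟩ := Fin.mem_range_natAdd_of_notMem_range_castAdd hdi
    refine mul_eq_zero_of_left (mul_eq_zero_of_right _ ?_) _
    refine Finset.prod_eq_zero (Finset.mem_univ a) (Finset.prod_eq_zero (Finset.mem_univ b) ?_)
    rw [ha, hb]
    exact hw.x_add_inv_mul_y i
  · obtain ⟨a, ha⟩ := Fin.mem_range_natAdd_of_notMem_range_castAdd hci
    refine mul_eq_zero_of_right _ ?_
    refine Finset.prod_eq_zero (Finset.mem_univ b) (Finset.prod_eq_zero (Finset.mem_univ a) ?_)
    rw [ha, hb]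
    exact hw.y_add_inv_mul_x_finRotate i
  · choose c' hc' using fun i => (hleft i).1
    choose d' hd' using fun i => (hleft i).2
    have hcc' : Fin.castAdd k₂ ∘ c' = c := funext hc'
    have hdd' : Fin.castAdd l₂ ∘ d' = d := funext hd'
    refine mul_eq_zero_of_left (mul_eq_zero_of_left (mul_eq_zero_of_left ?_ _) _) _
    refine hf.eval_eq_zero_of_isWheelOn hfw (hcc' ▸ hc).of_comp (hdd' ▸ hd).of_comp ?_
      fun a b => hD _ _
    rwa [isWheelOn_comp_sumMap_iff, hcc', hdd']
  · choose c' hc' using fun i => Fin.mem_range_natAdd_of_notMem_range_castAdd (hright i).1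
    choose d' hd' using fun i => Fin.mem_range_natAdd_of_notMem_range_castAdd (hright i).2
    have hcc' : Fin.natAdd k₁ ∘ c' = c := funext hc'
    have hdd' : Fin.natAdd l₁ ∘ d' = d := funext hd'
    refine mul_eq_zero_of_left (mul_eq_zero_of_left (mul_eq_zero_of_right _ ?_) _) _
    refine hg.eval_eq_zero_of_isWheelOn hgw (hcc' ▸ hc).of_comp (hdd' ▸ hd).of_comp ?_
      fun a b => hD _ _
    rwa [isWheelOn_comp_sumMap_iff, hcc', hdd']

end shufTerm

theorem stmt14_general (t : ℕ) (v : ℂ)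
    (k₁ l₁ k₂ l₂ : ℕ) (f : LNum k₁ l₁) (g : LNum k₂ l₂)
    (hf : SkewSym f) (hg : SkewSym g)
    (hfw : WheelCond v t f) (hgw : WheelCond v t g) :
    WheelCond v t (shufNum v f g) := by
  intro z hz hD
  obtain ⟨hn, hm, hz⟩ := wheelPt_iff.1 hz
  rw [Dval_ne_zero_iff] at hD
  rw [shufNum_eq_sum_rename_shufTerm, smul_eval, map_sum]
  refine mul_eq_zero_of_right _ (Finset.sum_eq_zero fun σ _ => ?_)
  rw [map_sum]
  refine Finset.sum_eq_zero fun τ _ => ?_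
  rw [map_zsmul, eval_rename]
  refine smul_eq_zero_of_right _ (eval_shufTerm_eq_zero hf hg hfw hgw
    ((σ⁻¹).injective.comp (Fin.castLE_injective hn))
    ((τ⁻¹).injective.comp (Fin.castLE_injective hm)) ?_ fun a b => hD _ _)
  rw [isWheelOn_comp_sumMap_iff]
  convert hz using 1 <;> funext i <;> simp

/-- for `v` a primitive `2t`-th root of unity, the subspace `Λ^w` of
elements of `Λ̄` satisfying the wheel condition is closed under the shuffle product. -/
theorem stmt14 (t : ℕ) (ht : 1 ≤ t) (v : ℂ) (hv : IsPrimitiveRoot v (2 * t))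
    (k₁ l₁ k₂ l₂ : ℕ) (f : LNum k₁ l₁) (g : LNum k₂ l₂)
    (hf : SkewSym f) (hg : SkewSym g)
    (hfw : WheelCond v t f) (hgw : WheelCond v t g) :
    WheelCond v t (shufNum v f g) :=
  stmt14_general t v k₁ l₁ k₂ l₂ f g hf hg hfw hgw
end

section
/- Let v in C be a primitive 2t-th root of unity (t >= 1) and let g be a polynomial in x_1,...,x_t, y_1,...,y_t over C, symmetric separately in the x's and the y's; write g = G(χ_1,...,χ_t, ψ_1,...,ψ_t) where χ_r, ψ_r are the elementary symmetric polynomials in the x's and y's respectively. Then g(x, v^2 x, ..., v^{2t-2} x, -v x, -v^3 x, ..., -v^{2t-1} x) = 0 for all x in C if and only if g lies in the ideal of the ring of bi-symmetric polynomials generated by χ_1,...,χ_{t-1}, ψ_1,...,ψ_{t-1}, and χ_t + (-1)^t ψ_t. -/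
/-!
A bisymmetric `g` is a polynomial `G(χ₁, …, χ_t, ψ₁, …, ψ_t)`: its coefficients as a
polynomial in the `x`'s are symmetric in the `y`'s, and the fundamental theorem of symmetric
polynomials applies first to them and then in the `x`'s. On the curve, `χ_r` and `ψ_r` vanish
for `0 < r < t`, while `χ_t = -(-x)^t` and `ψ_t = x^t`. As `x^t` runs over all of `ℂ`, `g`
vanishes on the curve iff `G` vanishes identically after the substitution `X_t ↦ -(-1)^t Y_t`
with all other variables except `Y_t` sent to `0`. A polynomial minus such a substitution lies
in the ideal generated by the differences `X_k - (image of X_k)`, namely by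
`X_1, …, X_{t-1}, Y_1, …, Y_{t-1}, X_t + (-1)^t Y_t`; substituting the `χ`'s and `ψ`'s into
the cofactors gives bisymmetric coefficients.
-/

open MvPolynomial Equiv

/-- Polynomials in `x_1,…,x_t, y_1,…,y_t` over ℂ. -/
abbrev BP (t : ℕ) : Type := MvPolynomial (Fin t ⊕ Fin t) ℂ

/-- A polynomial that is symmetric separately in the `x`-variables and the `y`-variables. -/
def BiSym {t : ℕ} (P : BP t) : Prop :=
  ∀ σ τ : Perm (Fin t), rename (Sum.map σ τ) P = P

/-- `χ_r`, the `r`-th elementary symmetric polynomial in the `x`-variables. -/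
noncomputable def chi (t r : ℕ) : BP t := rename Sum.inl (esymm (Fin t) ℂ r)

/-- `ψ_r`, the `r`-th elementary symmetric polynomial in the `y`-variables. -/
noncomputable def psi (t r : ℕ) : BP t := rename Sum.inr (esymm (Fin t) ℂ r)

lemma eval_esymm_primitiveRoot_mul {R : Type*} [CommRing R] [IsDomain R] {t r : ℕ} {w : R}
    (hw : IsPrimitiveRoot w t) (c : R) (hr : 0 < r) (hrt : r ≤ t) :
    eval (fun i : Fin t => w ^ (i : ℕ) * c) (esymm (Fin t) R r) =
      if r = t then -(-c) ^ t else 0 := by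
  have hprod : ∏ i : Fin t, (Polynomial.X + Polynomial.C (w ^ (i : ℕ) * c)) =
      Polynomial.X ^ t - Polynomial.C ((-c) ^ t) := by
    rw [X_pow_sub_C_eq_prod hw (by omega) rfl, ← Fin.prod_univ_eq_prod_range]
    simp [sub_eq_add_neg]
  have hcoeff := Finset.prod_X_add_C_coeff Finset.univ (fun i : Fin t => w ^ (i : ℕ) * c)
    (k := t - r) (by simp)
  rw [hprod, Finset.card_univ, Fintype.card_fin, Nat.sub_sub_self hrt] at hcoeff
  simp only [esymm, map_sum, map_prod, eval_X]
  rw [← hcoeff, Polynomial.coeff_sub, Polynomial.coeff_X_pow, Polynomial.coeff_C]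
  split_ifs <;> first | omega | simp

section Bisymmetric

variable {σ τ R : Type*} [CommRing R]

lemma sumAlgEquiv_rename_sumMap {σ' τ' : Type*} (f₁ : σ → σ') (f₂ : τ → τ')
    (p : MvPolynomial (σ ⊕ τ) R) :
    sumAlgEquiv R σ' τ' (rename (Sum.map f₁ f₂) p) =
      rename f₁ (map (rename (R := R) f₂).toRingHom (sumAlgEquiv R σ τ p)) := by
  induction p using MvPolynomial.induction_on with
  | C a => simp
  | add p q hp hq => simp only [map_add, hp, hq]
  | mul_X p k hp => cases k <;> simp [hp]

lemma sumAlgEquiv_symm_C (p : MvPolynomial τ R) :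
    (sumAlgEquiv R σ τ).symm (C p) = rename Sum.inr p := by
  rw [AlgEquiv.symm_apply_eq]
  exact (DFunLike.congr_fun (sumAlgEquiv_comp_rename_inr (R := R) (S₁ := σ) (S₂ := τ)) p).symm

lemma sumAlgEquiv_symm_esymm [Fintype σ] (r : ℕ) :
    (sumAlgEquiv R σ τ).symm (esymm σ (MvPolynomial τ R) r) =
      rename Sum.inl (esymm σ R r) := by
  simp [esymm, map_sum, map_prod]

lemma exists_isSymmetric_map_val_eq_sumAlgEquiv {g : MvPolynomial (σ ⊕ τ) R}
    (hg : ∀ (e₁ : Perm σ) (e₂ : Perm τ), rename (Sum.map e₁ e₂) g = g) :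
    ∃ p : MvPolynomial σ (symmetricSubalgebra τ R), p.IsSymmetric ∧
      map (symmetricSubalgebra τ R).val.toRingHom p = sumAlgEquiv R σ τ g := by
  have hcoeffs : ((sumAlgEquiv R σ τ g).coeffs : Set (MvPolynomial τ R)) ⊆
      Set.range (symmetricSubalgebra τ R).val := by
    intro c hc
    obtain ⟨d, -, rfl⟩ := mem_coeffs_iff.mp hc
    refine ⟨⟨_, fun e₂ => ?_⟩, rfl⟩
    have := congrArg (coeff d) (sumAlgEquiv_rename_sumMap (⇑(1 : Perm σ)) e₂ g)
    rwa [hg, Perm.coe_one, rename_id_apply, coeff_map, eq_comm] at this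
  obtain ⟨p, hp⟩ := mem_range_map_iff_coeffs_subset.mpr hcoeffs
  refine ⟨p, fun e₁ => map_injective (symmetricSubalgebra τ R).val.toRingHom
    Subtype.val_injective ?_, hp⟩
  have := sumAlgEquiv_rename_sumMap e₁ (⇑(1 : Perm τ)) g
  rw [hg, Perm.coe_one, rename_id, AlgHom.toRingHom_eq_coe, AlgHom.id_toRingHom, map_id] at this
  rw [map_rename, hp]
  exact this.symm

variable (σ τ R) in
noncomputable def esymmSum [Fintype σ] [Fintype τ] (m n : ℕ) :
    Fin m ⊕ Fin n → MvPolynomial (σ ⊕ τ) R :=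
  Sum.elim (fun i => rename Sum.inl (esymm σ R (i + 1)))
    (fun j => rename Sum.inr (esymm τ R (j + 1)))

variable [Fintype σ] [Fintype τ] {m n : ℕ}

lemma rename_sumMap_esymmSum (e₁ : Perm σ) (e₂ : Perm τ) (k : Fin m ⊕ Fin n) :
    rename (Sum.map e₁ e₂) (esymmSum σ τ R m n k) = esymmSum σ τ R m n k := by
  cases k with
  | inl i =>
    change rename _ (rename Sum.inl _) = rename Sum.inl _
    rw [rename_rename, show Sum.map e₁ e₂ ∘ Sum.inl = Sum.inl ∘ e₁ from rfl,
      ← rename_rename, rename_esymm]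
  | inr j =>
    change rename _ (rename Sum.inr _) = rename Sum.inr _
    rw [rename_rename, show Sum.map e₁ e₂ ∘ Sum.inr = Sum.inr ∘ e₂ from rfl,
      ← rename_rename, rename_esymm]

lemma rename_sumMap_aeval_esymmSum (e₁ : Perm σ) (e₂ : Perm τ)
    (G : MvPolynomial (Fin m ⊕ Fin n) R) :
    rename (Sum.map e₁ e₂) (aeval (esymmSum σ τ R m n) G) =
      aeval (esymmSum σ τ R m n) G := by
  rw [comp_aeval_apply]
  simp only [rename_sumMap_esymmSum]

lemma rename_inr_mem_range_aeval_esymmSum (hn : Fintype.card τ ≤ n) {p : MvPolynomial τ R}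
    (hp : p.IsSymmetric) :
    rename Sum.inr p ∈ (aeval (R := R) (esymmSum σ τ R m n)).range := by
  obtain ⟨d, hd⟩ := esymmAlgHom_surjective R hn ⟨p, hp⟩
  refine (AlgHom.mem_range _).mpr ⟨rename Sum.inr d, ?_⟩
  have hd' : aeval (fun j : Fin n => esymm τ R (j + 1)) d = p := by
    rw [← esymmAlgHom_apply, hd]
  rw [aeval_rename, ← hd', comp_aeval_apply]
  rfl

lemma sumAlgEquiv_symm_map_aeval_esymm_mem_range (hn : Fintype.card τ ≤ n)
    (q : MvPolynomial (Fin m) (symmetricSubalgebra τ R)) :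
    (sumAlgEquiv R σ τ).symm (map (symmetricSubalgebra τ R).val.toRingHom
        (aeval (fun i : Fin m => esymm σ (symmetricSubalgebra τ R) (i + 1)) q)) ∈
      (aeval (R := R) (esymmSum σ τ R m n)).range := by
  induction q using MvPolynomial.induction_on with
  | C s =>
    rw [aeval_C, algebraMap_eq, map_C, sumAlgEquiv_symm_C]
    exact rename_inr_mem_range_aeval_esymmSum hn s.2
  | add q₁ q₂ h₁ h₂ => simp only [map_add]; exact add_mem h₁ h₂
  | mul_X q i h =>
    simp only [map_mul]
    refine mul_mem h ((AlgHom.mem_range _).mpr ⟨X (Sum.inl i), ?_⟩)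
    rw [aeval_X, aeval_X, map_esymm, sumAlgEquiv_symm_esymm]
    rfl

theorem mem_range_aeval_esymmSum (hm : Fintype.card σ ≤ m) (hn : Fintype.card τ ≤ n)
    {g : MvPolynomial (σ ⊕ τ) R}
    (hg : ∀ (e₁ : Perm σ) (e₂ : Perm τ), rename (Sum.map e₁ e₂) g = g) :
    g ∈ (aeval (R := R) (esymmSum σ τ R m n)).range := by
  obtain ⟨p, hpsym, hp⟩ := exists_isSymmetric_map_val_eq_sumAlgEquiv hg
  obtain ⟨q, hq⟩ := esymmAlgHom_surjective _ hm ⟨p, (mem_symmetricSubalgebra p).mpr hpsym⟩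
  have hgq := sumAlgEquiv_symm_map_aeval_esymm_mem_range (σ := σ) hn q
  rwa [← esymmAlgHom_apply, hq, hp, AlgEquiv.symm_apply_apply] at hgq

end Bisymmetric

lemma sub_aeval_mem_span_X_sub {σ R : Type*} [CommRing R] (f : σ → MvPolynomial σ R)
    (p : MvPolynomial σ R) : p - aeval f p ∈ Ideal.span (Set.range fun k => X k - f k) := by
  induction p using MvPolynomial.induction_on with
  | C a => simp
  | add p q hp hq => simpa [map_add, add_sub_add_comm] using add_mem hp hq
  | mul_X p k hp =>
    have hk : X k - f k ∈ Ideal.span (Set.range fun k => X k - f k) :=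
      Ideal.subset_span ⟨k, rfl⟩
    have hsplit : p * X k - aeval f (p * X k) =
        (p - aeval f p) * X k + aeval f p * (X k - f k) := by
      simp only [map_mul, aeval_X]
      ring
    rw [hsplit]
    exact add_mem (Ideal.mul_mem_right _ _ hp) (Ideal.mul_mem_left _ _ hk)

lemma eval_aeval {σ τ R : Type*} [CommRing R] (z : τ → R) (f : σ → MvPolynomial τ R)
    (p : MvPolynomial σ R) : eval z (aeval f p) = eval (fun k => eval z (f k)) p := by
  simp only [← coe_aeval_eq_eval, RingHom.coe_coe, comp_aeval_apply]

section BiSym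

variable {t : ℕ} {p q : BP t}

lemma biSym_zero : BiSym (0 : BP t) := fun _ _ => map_zero _

lemma biSym_one : BiSym (1 : BP t) := fun _ _ => map_one _

lemma BiSym.add (hp : BiSym p) (hq : BiSym q) : BiSym (p + q) := fun σ τ => by
  rw [map_add, hp, hq]

lemma BiSym.mul (hp : BiSym p) (hq : BiSym q) : BiSym (p * q) := fun σ τ => by
  rw [map_mul, hp, hq]

end BiSym

def InChiPsiIdeal (t : ℕ) (g : BP t) : Prop :=
  ∃ (a b : ℕ → BP t) (c : BP t),
    (∀ r, BiSym (a r)) ∧ (∀ r, BiSym (b r)) ∧ BiSym c ∧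
    g = (∑ r ∈ Finset.Icc 1 (t - 1), a r * chi t r) +
        (∑ r ∈ Finset.Icc 1 (t - 1), b r * psi t r) +
        c * (chi t t + C ((-1 : ℂ) ^ t) * psi t t)

namespace InChiPsiIdeal

variable {t : ℕ} {g h : BP t}

lemma zero : InChiPsiIdeal t 0 :=
  ⟨0, 0, 0, fun _ => biSym_zero, fun _ => biSym_zero, biSym_zero, by simp⟩

lemma add (hg : InChiPsiIdeal t g) (hh : InChiPsiIdeal t h) : InChiPsiIdeal t (g + h) := by
  obtain ⟨a, b, c, ha, hb, hc, rfl⟩ := hg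
  obtain ⟨a', b', c', ha', hb', hc', rfl⟩ := hh
  refine ⟨a + a', b + b', c + c', fun r => (ha r).add (ha' r), fun r => (hb r).add (hb' r),
    hc.add hc', ?_⟩
  simp only [Pi.add_apply, add_mul, Finset.sum_add_distrib]
  ring

lemma mul_left {p : BP t} (hp : BiSym p) (hg : InChiPsiIdeal t g) : InChiPsiIdeal t (p * g) := by
  obtain ⟨a, b, c, ha, hb, hc, rfl⟩ := hg
  refine ⟨fun r => p * a r, fun r => p * b r, p * c, fun r => hp.mul (ha r),
    fun r => hp.mul (hb r), hp.mul hc, ?_⟩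
  simp only [mul_add, Finset.mul_sum, mul_assoc]

lemma chi_mem {r : ℕ} (hr : r ∈ Finset.Icc 1 (t - 1)) : InChiPsiIdeal t (chi t r) := by
  refine ⟨fun s => if s = r then 1 else 0, 0, 0, fun s => ?_, fun _ => biSym_zero, biSym_zero,
    by simp [hr]⟩
  dsimp only
  split_ifs
  exacts [biSym_one, biSym_zero]

lemma psi_mem {r : ℕ} (hr : r ∈ Finset.Icc 1 (t - 1)) : InChiPsiIdeal t (psi t r) := by
  refine ⟨0, fun s => if s = r then 1 else 0, 0, fun _ => biSym_zero, fun s => ?_, biSym_zero,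
    by simp [hr]⟩
  dsimp only
  split_ifs
  exacts [biSym_one, biSym_zero]

lemma chi_add_psi_mem : InChiPsiIdeal t (chi t t + C ((-1 : ℂ) ^ t) * psi t t) :=
  ⟨0, 0, 1, fun _ => biSym_zero, fun _ => biSym_zero, biSym_one, by simp⟩

end InChiPsiIdeal

noncomputable abbrev chiPsi (t : ℕ) : Fin t ⊕ Fin t → BP t := esymmSum (Fin t) (Fin t) ℂ t t

def curvePoint (t : ℕ) (v x : ℂ) : Fin t ⊕ Fin t → ℂ :=
  Sum.elim (fun i : Fin t => v ^ (2 * (i : ℕ)) * x)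
    (fun j : Fin t => -(v ^ (2 * (j : ℕ) + 1) * x))

section Curve

variable {t r : ℕ} {v : ℂ}

lemma eval_chi_curvePoint (hv : IsPrimitiveRoot v (2 * t)) (x : ℂ) (hr : 0 < r) (hrt : r ≤ t) :
    eval (curvePoint t v x) (chi t r) = if r = t then -(-x) ^ t else 0 := by
  rw [chi, eval_rename, ← eval_esymm_primitiveRoot_mul (hv.pow (by omega) rfl) x hr hrt]
  congr 2
  funext i
  simp [curvePoint, pow_mul]

lemma eval_psi_curvePoint (hv : IsPrimitiveRoot v (2 * t)) (x : ℂ) (hr : 0 < r) (hrt : r ≤ t) :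
    eval (curvePoint t v x) (psi t r) = if r = t then x ^ t else 0 := by
  have hvt : v ^ t = -1 := (hv.pow (by omega) (mul_comm 2 t)).eq_neg_one_of_two_right
  have hpoint : curvePoint t v x ∘ Sum.inr = fun j : Fin t => (v ^ 2) ^ (j : ℕ) * -(v * x) := by
    funext j
    simp only [curvePoint, Function.comp_apply, Sum.elim_inr]
    ring
  rw [psi, eval_rename, hpoint, eval_esymm_primitiveRoot_mul (hv.pow (by omega) rfl) _ hr hrt]
  simp [mul_pow, hvt]

end Curve

lemma biSym_aeval_chiPsi {t : ℕ} (G : BP t) : BiSym (aeval (chiPsi t) G) :=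
  fun σ τ => rename_sumMap_aeval_esymmSum σ τ G

lemma InChiPsiIdeal.eval_curvePoint_eq_zero {t : ℕ} {v : ℂ} (hv : IsPrimitiveRoot v (2 * t))
    (ht : 0 < t) {g : BP t} (hg : InChiPsiIdeal t g) (x : ℂ) :
    eval (curvePoint t v x) g = 0 := by
  obtain ⟨a, b, c, -, -, -, rfl⟩ := hg
  have hchi : ∀ r ∈ Finset.Icc 1 (t - 1), eval (curvePoint t v x) (chi t r) = 0 := by
    intro r hr
    rw [Finset.mem_Icc] at hr
    rw [eval_chi_curvePoint hv x (by omega) (by omega), if_neg (by omega)]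
  have hpsi : ∀ r ∈ Finset.Icc 1 (t - 1), eval (curvePoint t v x) (psi t r) = 0 := by
    intro r hr
    rw [Finset.mem_Icc] at hr
    rw [eval_psi_curvePoint hv x (by omega) (by omega), if_neg (by omega)]
  simp only [map_add, map_mul, map_sum, eval_C, eval_chi_curvePoint hv x ht le_rfl,
    eval_psi_curvePoint hv x ht le_rfl, if_true]
  rw [Finset.sum_eq_zero fun r hr => by rw [hchi r hr, mul_zero],
    Finset.sum_eq_zero fun r hr => by rw [hpsi r hr, mul_zero], neg_pow]
  ring

section LastCoordinates

variable {n : ℕ}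

def curveValues {R : Type*} [CommRing R] (n : ℕ) (s : R) : Fin (n + 1) ⊕ Fin (n + 1) → R :=
  Sum.elim (Pi.single (Fin.last n) (-(-1) ^ (n + 1) * s)) (Pi.single (Fin.last n) s)

lemma map_curveValues {R S : Type*} [CommRing R] [CommRing S] (φ : R →+* S) (s : R)
    (k : Fin (n + 1) ⊕ Fin (n + 1)) : φ (curveValues n s k) = curveValues n (φ s) k := by
  cases k <;> simp [curveValues, Pi.single_apply, apply_ite φ]

lemma Fin.val_add_one_eq_iff_eq_last (i : Fin (n + 1)) :
    (i : ℕ) + 1 = n + 1 ↔ i = Fin.last n := by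
  rw [Fin.ext_iff, Fin.val_last]
  omega

lemma eval_chiPsi_curvePoint {v : ℂ} (hv : IsPrimitiveRoot v (2 * (n + 1))) (x : ℂ) :
    (fun k => eval (curvePoint (n + 1) v x) (chiPsi (n + 1) k)) =
      curveValues n (x ^ (n + 1)) := by
  funext k
  cases k with
  | inl i =>
    change eval _ (chi (n + 1) (i + 1)) = _
    rw [eval_chi_curvePoint hv x i.val.succ_pos i.is_lt, neg_pow]
    simp only [curveValues, Sum.elim_inl, Pi.single_apply, ← Fin.val_add_one_eq_iff_eq_last,
      neg_mul, Nat.succ_eq_add_one]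
  | inr j =>
    change eval _ (psi (n + 1) (j + 1)) = _
    rw [eval_psi_curvePoint hv x j.val.succ_pos j.is_lt]
    simp only [curveValues, Sum.elim_inr, Pi.single_apply, ← Fin.val_add_one_eq_iff_eq_last]

noncomputable abbrev curveSubst (n : ℕ) : Fin (n + 1) ⊕ Fin (n + 1) → BP (n + 1) :=
  curveValues n (X (Sum.inr (Fin.last n)))

lemma aeval_curveSubst_eq_zero {G : BP (n + 1)} (hG : ∀ s, eval (curveValues n s) G = 0) :
    aeval (curveSubst n) G = 0 := by
  refine MvPolynomial.funext fun z => ?_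
  simp only [eval_aeval, map_curveValues, eval_X, hG, map_zero]

lemma inChiPsiIdeal_aeval_X_sub_curveSubst (k : Fin (n + 1) ⊕ Fin (n + 1)) :
    InChiPsiIdeal (n + 1)
      (aeval (chiPsi (n + 1)) (X k - curveSubst n k)) := by
  have hmem {i : Fin (n + 1)} (hi : i ≠ Fin.last n) :
      (i : ℕ) + 1 ∈ Finset.Icc 1 (n + 1 - 1) := by
    have := (Fin.val_add_one_eq_iff_eq_last i).not.mpr hi
    simp only [Finset.mem_Icc]
    omega
  cases k with
  | inl i =>
    by_cases hi : i = Fin.last n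
    · subst hi
      convert InChiPsiIdeal.chi_add_psi_mem using 1
      simp [curveValues, chiPsi, esymmSum, chi, psi]
    · convert InChiPsiIdeal.chi_mem (hmem hi) using 1
      rw [curveSubst, curveValues, Sum.elim_inl, Pi.single_eq_of_ne hi, sub_zero, aeval_X]
      rfl
  | inr j =>
    by_cases hj : j = Fin.last n
    · subst hj
      convert InChiPsiIdeal.zero using 1
      simp [curveValues]
    · convert InChiPsiIdeal.psi_mem (hmem hj) using 1
      rw [curveSubst, curveValues, Sum.elim_inr, Pi.single_eq_of_ne hj, sub_zero, aeval_X]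
      rfl

lemma inChiPsiIdeal_aeval_of_mem_span {G : BP (n + 1)}
    (hG : G ∈ Ideal.span (Set.range fun k => X k - curveSubst n k)) :
    InChiPsiIdeal (n + 1) (aeval (chiPsi (n + 1)) G) := by
  induction hG using Submodule.span_induction with
  | mem _ hk =>
    obtain ⟨k, rfl⟩ := hk
    exact inChiPsiIdeal_aeval_X_sub_curveSubst k
  | zero => simpa using InChiPsiIdeal.zero
  | add _ _ _ _ h₁ h₂ => simpa using h₁.add h₂
  | smul p _ _ h => simpa using h.mul_left (biSym_aeval_chiPsi p)

end LastCoordinates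

/-- for `v` a primitive `2t`-th root of unity and `g` bi-symmetric,
`g(x, v²x, …, v^{2t-2}x, -vx, -v³x, …, -v^{2t-1}x) = 0` for all `x ∈ ℂ` iff `g` lies
in the ideal of the ring of bi-symmetric polynomials generated by
`χ_1,…,χ_{t-1}, ψ_1,…,ψ_{t-1}` and `χ_t + (-1)^t ψ_t`. -/
theorem stmt15 (t : ℕ) (ht : 1 ≤ t) (v : ℂ) (hv : IsPrimitiveRoot v (2 * t))
    (g : BP t) (hg : BiSym g) :
    (∀ x : ℂ,
      eval (Sum.elim (fun i : Fin t => v ^ (2 * (i : ℕ)) * x)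
                     (fun j : Fin t => -(v ^ (2 * (j : ℕ) + 1) * x))) g = 0) ↔
    ∃ (a b : ℕ → BP t) (c : BP t),
      (∀ r, BiSym (a r)) ∧ (∀ r, BiSym (b r)) ∧ BiSym c ∧
      g = (∑ r ∈ Finset.Icc 1 (t - 1), a r * chi t r) +
          (∑ r ∈ Finset.Icc 1 (t - 1), b r * psi t r) +
          c * (chi t t + C ((-1 : ℂ) ^ t) * psi t t) := by
  obtain ⟨n, rfl⟩ : ∃ n, t = n + 1 := ⟨t - 1, by omega⟩
  refine ⟨fun hvanish => ?_, InChiPsiIdeal.eval_curvePoint_eq_zero hv n.succ_pos⟩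
  obtain ⟨G, rfl⟩ := (AlgHom.mem_range _).mp
    (mem_range_aeval_esymmSum (R := ℂ) (m := n + 1) (n := n + 1) (by simp) (by simp) hg)
  have hG : ∀ s, eval (curveValues n s) G = 0 := fun s => by
    obtain ⟨x, rfl⟩ := IsAlgClosed.exists_pow_nat_eq s n.succ_pos
    rw [← eval_chiPsi_curvePoint hv x, ← eval_aeval]
    exact hvanish x
  apply inChiPsiIdeal_aeval_of_mem_span
  simpa only [aeval_curveSubst_eq_zero hG, sub_zero] using
    sub_aeval_mem_span_X_sub (curveSubst n) G
end
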